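/- Let E be a real inner product space and let χ₁, …, χ_M : E → E be linear maps with ∑_{i=1}^M χ_i = id_E. Suppose there is a coloring c : {1, …, M} → {1, …, ζ} such that for all i ≠ j with c(i) = c(j) one has ⟨χ_i(x), χ_j(y)⟩ = 0 for all x, y ∈ E. Let u ∈ E and suppose v₁, …, v_M ∈ E and ε₁, …, ε_M ≥ 0 satisfy ‖χ_i(u − v_i)‖ ≤ ε_i for each i. Then ‖u − ∑_{i=1}^M χ_i(v_i)‖ ≤ (ζ · ∑_{i=1}^M ε_i²)^{1/2}. -/

import Mathlib

/-! Writing `u - ∑ χᵢ vᵢ = ∑ χᵢ (u - vᵢ)`, the terms of one colour are pairwise orthogonal, so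
each colour class contributes the square root of the sum of its `εᵢ²` (Pythagoras). There are
`ζ` colour classes, and Cauchy–Schwarz over them costs the factor `ζ`. -/

open Finset RealInnerProductSpace

theorem LinearMap.sub_sum_apply_eq_sum_apply_sub {R M ι : Type*} [Semiring R] [AddCommGroup M]
    [Module R M] {s : Finset ι} {χ : ι → M →ₗ[R] M} (hχ : ∑ i ∈ s, χ i = LinearMap.id)
    (u : M) (v : ι → M) : u - ∑ i ∈ s, χ i (v i) = ∑ i ∈ s, χ i (u - v i) := by
  have hu : ∑ i ∈ s, χ i u = u := by simpa using congrArg (· u) hχ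
  simp only [map_sub, sum_sub_distrib, hu]

section InnerProduct

variable {ι F : Type*} [NormedAddCommGroup F] [InnerProductSpace ℝ F]

theorem norm_sum_sq_eq_sum_norm_sq_of_pairwise_inner_eq_zero {s : Finset ι} {w : ι → F}
    (hw : (s : Set ι).Pairwise fun i j => ⟪w i, w j⟫ = 0) :
    ‖∑ i ∈ s, w i‖ ^ 2 = ∑ i ∈ s, ‖w i‖ ^ 2 := by
  classical
  rw [← real_inner_self_eq_norm_sq, sum_inner]
  refine sum_congr rfl fun i hi => ?_
  rw [inner_sum, sum_eq_single_of_mem i hi fun j hj hji => hw hi hj hji.symm,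
    real_inner_self_eq_norm_sq]

theorem norm_sum_sq_le_card_mul_sum_norm_sq_of_coloring {κ : Type*} [Fintype ι] [Fintype κ]
    [DecidableEq κ] (c : ι → κ) (w : ι → F)
    (hw : ∀ i j, i ≠ j → c i = c j → ⟪w i, w j⟫ = 0) :
    ‖∑ i, w i‖ ^ 2 ≤ Fintype.card κ * ∑ i, ‖w i‖ ^ 2 := by
  have hclass : ∀ k, ‖∑ i with c i = k, w i‖ ^ 2 = ∑ i with c i = k, ‖w i‖ ^ 2 := fun k =>
    norm_sum_sq_eq_sum_norm_sq_of_pairwise_inner_eq_zero fun i hi j hj hij =>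
      hw i j hij ((mem_filter.1 hi).2.trans (mem_filter.1 hj).2.symm)
  calc ‖∑ i, w i‖ ^ 2 = ‖∑ k, ∑ i with c i = k, w i‖ ^ 2 := by rw [sum_fiberwise]
    _ ≤ (∑ k, ‖∑ i with c i = k, w i‖) ^ 2 := by gcongr; exact norm_sum_le _ _
    _ ≤ Fintype.card κ * ∑ k, ‖∑ i with c i = k, w i‖ ^ 2 := sq_sum_le_card_mul_sum_sq
    _ = Fintype.card κ * ∑ i, ‖w i‖ ^ 2 := by simp only [hclass, sum_fiberwise]

end InnerProduct

theorem gfem_global_approximation_general {E : Type*} [NormedAddCommGroup E] [InnerProductSpace ℝ E]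
    (M ζ : ℕ) (χ : Fin M → E →ₗ[ℝ] E)
    (hsum : ∑ i, χ i = LinearMap.id)
    (c : Fin M → Fin ζ)
    (horth : ∀ i j : Fin M, i ≠ j → c i = c j →
      ∀ x y : E, inner ℝ (χ i x) (χ j y) = (0 : ℝ))
    (u : E) (v : Fin M → E) (ε : Fin M → ℝ)
    (hloc : ∀ i, ‖χ i (u - v i)‖ ≤ ε i) :
    ‖u - ∑ i, χ i (v i)‖ ≤ Real.sqrt ((ζ : ℝ) * ∑ i, ε i ^ 2) := by
  rw [LinearMap.sub_sum_apply_eq_sum_apply_sub hsum]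
  refine Real.le_sqrt_of_sq_le ?_
  calc ‖∑ i, χ i (u - v i)‖ ^ 2 ≤ Fintype.card (Fin ζ) * ∑ i, ‖χ i (u - v i)‖ ^ 2 :=
        norm_sum_sq_le_card_mul_sum_norm_sq_of_coloring c _ fun i j hij hc => horth i j hij hc _ _
    _ ≤ ζ * ∑ i, ε i ^ 2 := by
        rw [Fintype.card_fin]
        gcongr with i
        exact hloc i

/-- Abstract GFEM approximation theorem: local errors εᵢ glue to a global error
    (ζ ∑ εᵢ²)^{1/2} via a partition of unity with coloring constant ζ. -/
theorem gfem_global_approximation {E : Type*} [NormedAddCommGroup E] [InnerProductSpace ℝ E]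
    (M ζ : ℕ) (χ : Fin M → E →ₗ[ℝ] E)
    (hsum : ∑ i, χ i = LinearMap.id)
    (c : Fin M → Fin ζ)
    (horth : ∀ i j : Fin M, i ≠ j → c i = c j →
      ∀ x y : E, inner ℝ (χ i x) (χ j y) = (0 : ℝ))
    (u : E) (v : Fin M → E) (ε : Fin M → ℝ) (hε : ∀ i, 0 ≤ ε i)
    (hloc : ∀ i, ‖χ i (u - v i)‖ ≤ ε i) :
    ‖u - ∑ i, χ i (v i)‖ ≤ Real.sqrt ((ζ : ℝ) * ∑ i, ε i ^ 2) :=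
  gfem_global_approximation_general M ζ χ hsum c horth u v ε hloc
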